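/- arXiv:1401.1805 — 2 statements merged into one kernel-verified Lean document; each statement's English description precedes it below -/
import Mathlib

section
/- For integers a ≥ 2 and t ≥ 2, ∫_0^{1/t}(1 − pt)(1−p)^{−1} β_{a,a(t−1)}(p) dp = P(X = a) − (1/(a(t−1)−1))·P(X > a), where X ~ Binomial(at−1, 1/t) and β_{a,a(t−1)} is the Beta(a, a(t−1)) density. In particular, for t = 2: P(S_{a,a} ≤ 1/2) = (1 + 1/(a−1))·C(2a−1, a)·2^{−(2a−1)} − 1/(2(a−1)). -/
/-- The Beta function `B(α,β) = ∫_0^1 x^{α-1}(1-x)^{β-1} dx`. -/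
noncomputable def Betafn (α β : ℝ) : ℝ :=
  ∫ x in (0:ℝ)..1, x ^ (α - 1) * (1 - x) ^ (β - 1)

/-- The Beta(α,β) density. -/
noncomputable def betaDens (α β p : ℝ) : ℝ :=
  p ^ (α - 1) * (1 - p) ^ (β - 1) / Betafn α β

/-- The Binomial(n,p) point probability `P(X_{n,p} = k)`. -/
noncomputable def binomProb (n : ℕ) (p : ℝ) (k : ℕ) : ℝ :=
  (Nat.choose n k : ℝ) * p ^ k * (1 - p) ^ (n - k)

/-!
Write `n = a + b - 1` with `b = a (t - 1)`. Since `d/dp P(X_{n,p} ≥ k) = k C(n,k) p^{k-1} (1-p)^{n-k}`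
(the derivative of the binomial tail telescopes), the integrand `(1 - p t) (1 - p)⁻¹ β_{a,b}(p)` is
the derivative of `p ↦ P(X_{n,p} = a) - P(X_{n,p} > a) / (b - 1)`, which vanishes at `p = 0`.
The same formula at `p = 1` gives `B(a, b) = 1 / (a C(n, a))`. For `t = 2` the law of
`X_{2a-1,1/2}` is symmetric, so `P(X ≥ a) = 1/2`.
-/

open Finset

lemma hasDerivAt_binomProb (n j : ℕ) (x : ℝ) :
    HasDerivAt (fun p => binomProb n p j)
      (j * n.choose j * x ^ (j - 1) * (1 - x) ^ (n - j)
        - (j + 1) * n.choose (j + 1) * x ^ j * (1 - x) ^ (n - (j + 1))) x := by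
  have h := ((hasDerivAt_pow j x).const_mul (n.choose j : ℝ)).mul
    ((hasDerivAt_pow (n - j) (1 - x)).comp x ((hasDerivAt_id x).const_sub 1))
  have hchoose : (n.choose (j + 1) : ℝ) * (j + 1) = n.choose j * (n - j : ℕ) := by
    exact_mod_cast Nat.choose_succ_right_eq n j
  refine h.congr_deriv ?_
  simp only [Function.comp_apply, Nat.sub_add_eq]
  linear_combination (x ^ j * (1 - x) ^ (n - j - 1)) * hchoose

lemma hasDerivAt_sum_Icc_binomProb (n k : ℕ) (hk : k ≤ n + 1) (x : ℝ) :
    HasDerivAt (fun p => ∑ j ∈ Icc k n, binomProb n p j)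
      (k * n.choose k * x ^ (k - 1) * (1 - x) ^ (n - k)) x := by
  set g : ℕ → ℝ := fun j => j * n.choose j * x ^ (j - 1) * (1 - x) ^ (n - j)
  refine (HasDerivAt.fun_sum (fun j _ => hasDerivAt_binomProb n j x)).congr_deriv ?_
  have hg : ∀ j : ℕ, g (j + 1) = (j + 1) * n.choose (j + 1) * x ^ j * (1 - x) ^ (n - (j + 1)) := by
    intro j; simp [g]
  have htel := Finset.sum_Ico_sub g hk
  rw [← Ico_add_one_right_eq_Icc]
  simp only [← hg, sum_sub_distrib] at htel ⊢
  simp only [g, Nat.choose_succ_self, Nat.cast_zero] at htel ⊢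
  linarith

lemma sum_Icc_binomProb_zero (n k : ℕ) (hk : 1 ≤ k) : ∑ j ∈ Icc k n, binomProb n 0 j = 0 :=
  sum_eq_zero fun j hj => by simp [binomProb, zero_pow (by grind : j ≠ 0)]

lemma sum_Icc_binomProb_one (n k : ℕ) (hk : k ≤ n) : ∑ j ∈ Icc k n, binomProb n 1 j = 1 := by
  rw [sum_eq_single_of_mem n (by simp [hk])]
  · simp [binomProb]
  · intro j hj hjn
    simp [binomProb, zero_pow (by grind : n - j ≠ 0)]

lemma Betafn_natCast (a b : ℕ) (ha : 1 ≤ a) (hb : 1 ≤ b) :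
    Betafn a b = ((a : ℝ) * (a + b - 1).choose a)⁻¹ := by
  have hFTC := intervalIntegral.integral_eq_sub_of_hasDerivAt
    (fun x _ => hasDerivAt_sum_Icc_binomProb (a + b - 1) a (by omega) x)
    (Continuous.intervalIntegrable (by fun_prop) 0 1)
  rw [sum_Icc_binomProb_one _ _ (by omega), sum_Icc_binomProb_zero _ _ ha, sub_zero,
    show a + b - 1 - a = b - 1 by omega] at hFTC
  simp only [mul_assoc, intervalIntegral.integral_const_mul] at hFTC
  refine eq_inv_of_mul_eq_one_right ?_
  simp only [Betafn, ← Nat.cast_pred ha, ← Nat.cast_pred hb, Real.rpow_natCast]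
  rwa [mul_assoc]

lemma betaDens_natCast (a b : ℕ) (ha : 1 ≤ a) (hb : 1 ≤ b) (p : ℝ) :
    betaDens a b p = a * (a + b - 1).choose a * (p ^ (a - 1) * (1 - p) ^ (b - 1)) := by
  rw [betaDens, Betafn_natCast a b ha hb, div_inv_eq_mul, mul_comm,
    ← Nat.cast_pred ha, ← Nat.cast_pred hb, Real.rpow_natCast, Real.rpow_natCast]

theorem integral_one_sub_mul_inv_one_sub_betaDens (a b : ℕ) (ha : 1 ≤ a) (hb : 2 ≤ b)
    (t x : ℝ) (hbt : (b : ℝ) = a * (t - 1)) :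
    ∫ p in (0:ℝ)..x, (1 - p * t) * (1 - p)⁻¹ * betaDens a b p
      = binomProb (a + b - 1) x a
          - 1 / ((b : ℝ) - 1) * ∑ k ∈ Icc (a + 1) (a + b - 1), binomProb (a + b - 1) x k := by
  obtain ⟨d, rfl⟩ := Nat.exists_eq_add_of_le' ha
  obtain ⟨c, rfl⟩ := Nat.exists_eq_add_of_le' hb
  rw [show d + 1 + (c + 2) - 1 = d + c + 2 by omega]
  set n := d + c + 2
  have hchoose : (n.choose (d + 1 + 1) : ℝ) * (d + 2) = n.choose (d + 1) * (c + 1) := by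
    have := Nat.choose_succ_right_eq n (d + 1)
    rw [show n - (d + 1) = c + 1 by omega] at this
    exact_mod_cast this
  set F : ℝ → ℝ := fun p =>
    binomProb n p (d + 1) - 1 / ((c + 2 : ℕ) - 1 : ℝ) * ∑ k ∈ Icc (d + 1 + 1) n, binomProb n p k
  set f : ℝ → ℝ := fun p => (d + 1) * n.choose (d + 1) * ((1 - p * t) * p ^ d * (1 - p) ^ c)
  have hF : ∀ p, HasDerivAt F (f p) p := by
    intro p
    refine ((hasDerivAt_binomProb n (d + 1) p).sub
      ((hasDerivAt_sum_Icc_binomProb n (d + 1 + 1) (by omega) p).const_mul _)).congr_deriv ?_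
    rw [show n - (d + 1) = c + 1 by omega, show n - (d + 1 + 1) = c by omega]
    simp only [f, Nat.add_sub_cancel]
    push_cast at hbt ⊢
    rw [show (c : ℝ) + 2 - 1 = c + 1 by ring]
    field_simp
    linear_combination (-(c + 2) * p ^ (d + 1) * (1 - p) ^ c) * hchoose
      - (c + 1) * n.choose (d + 1) * p ^ (d + 1) * (1 - p) ^ c * hbt
  have hf : ∀ p ≠ 1, (1 - p * t) * (1 - p)⁻¹ * betaDens (d + 1 : ℕ) (c + 2 : ℕ) p = f p := by
    intro p hp
    have h1p : 1 - p ≠ 0 := sub_ne_zero.2 hp.symm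
    rw [betaDens_natCast _ _ (by omega) (by omega), show d + 1 + (c + 2) - 1 = n by omega]
    simp only [f, Nat.add_sub_cancel, show c + 2 - 1 = c + 1 by omega, pow_succ _ c]
    field_simp
    push_cast
    ring
  -- `(1 - p)⁻¹` is junk at `p = 1`, a null set
  calc _ = ∫ p in (0:ℝ)..x, f p :=
        intervalIntegral.integral_congr_ae ((MeasureTheory.Measure.ae_ne _ 1).mono
          fun p hp _ => hf p hp)
    _ = F x - F 0 :=
        intervalIntegral.integral_eq_sub_of_hasDerivAt (fun p _ => hF p)
          (Continuous.intervalIntegrable (by fun_prop) _ _)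
    _ = F x := by
      rw [sub_eq_self]
      simp only [F, sum_Icc_binomProb_zero n (d + 1 + 1) (by omega)]
      simp [binomProb]

lemma binomProb_one_half (n k : ℕ) (hk : k ≤ n) :
    binomProb n (1 / 2) k = n.choose k / 2 ^ n := by
  rw [binomProb, show (1 : ℝ) - 1 / 2 = 1 / 2 by norm_num, mul_assoc, ← pow_add,
    Nat.add_sub_cancel' hk, div_pow, one_pow, mul_one_div]

lemma sum_Icc_choose_halfway (m : ℕ) :
    ∑ k ∈ Icc (m + 1) (2 * m + 1), (2 * m + 1).choose k = 4 ^ m := by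
  have htotal := sum_range_add_sum_Ico (fun k => (2 * m + 1).choose k)
    (by omega : m + 1 ≤ 2 * m + 1 + 1)
  rw [Nat.sum_range_choose_halfway, Nat.sum_range_choose, Ico_add_one_right_eq_Icc] at htotal
  have hpow : 2 ^ (2 * m + 1) = 2 * 4 ^ m := by rw [pow_succ, pow_mul]; ring
  omega

lemma sum_Icc_binomProb_one_half (a : ℕ) (ha : 1 ≤ a) :
    ∑ k ∈ Icc a (2 * a - 1), binomProb (2 * a - 1) (1 / 2) k = 1 / 2 := by
  obtain ⟨m, rfl⟩ := Nat.exists_eq_add_of_le' ha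
  rw [show 2 * (m + 1) - 1 = 2 * m + 1 by omega]
  rw [sum_congr rfl fun k hk => binomProb_one_half _ k (mem_Icc.1 hk).2, ← sum_div,
    ← Nat.cast_sum, sum_Icc_choose_halfway, pow_succ, pow_mul]
  norm_num
  field_simp

/-- For integers `a ≥ 2` and `t ≥ 2`,
`∫_0^{1/t}(1 − pt)(1−p)^{−1} β_{a,a(t−1)}(p) dp = P(X = a) − P(X > a)/(a(t−1)−1)`
with `X ~ Binomial(at−1, 1/t)`; in particular for `t = 2` this quantity equals
`(1 + 1/(a−1))·C(2a−1, a)·2^{−(2a−1)} − 1/(2(a−1))`. -/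
theorem polya_start_on_line_integral (a : ℕ) (ha : 2 ≤ a) :
    (∀ t : ℕ, 2 ≤ t →
      (∫ p in (0:ℝ)..(1 / t),
          (1 - p * t) * (1 - p)⁻¹ * betaDens a (a * (t - 1)) p)
        = binomProb (a * t - 1) (1 / t) a
            - (1 / ((a : ℝ) * ((t : ℝ) - 1) - 1)) *
                ∑ k ∈ Finset.Icc (a + 1) (a * t - 1), binomProb (a * t - 1) (1 / t) k) ∧
    (∫ p in (0:ℝ)..(1 / 2),
        (1 - p * 2) * (1 - p)⁻¹ * betaDens a a p)
      = (1 + 1 / ((a : ℝ) - 1)) * (Nat.choose (2 * a - 1) a : ℝ) / 2 ^ (2 * a - 1)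
          - 1 / (2 * ((a : ℝ) - 1)) := by
  refine ⟨fun t ht => ?_, ?_⟩
  · have hb : ((a * (t - 1) : ℕ) : ℝ) = a * ((t : ℝ) - 1) := by
      push_cast [Nat.cast_sub (by omega : 1 ≤ t)]; ring
    have hn : a + a * (t - 1) = a * t := by
      have := Nat.le_mul_of_pos_right a (by omega : 0 < t)
      rw [Nat.mul_sub_one]; omega
    have hb2 : 2 ≤ a * (t - 1) := le_trans ha (Nat.le_mul_of_pos_right a (by omega))
    have h := integral_one_sub_mul_inv_one_sub_betaDens a _ (by omega) hb2 t (1 / t) hb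
    rwa [hb, hn] at h
  · have h := integral_one_sub_mul_inv_one_sub_betaDens a a (by omega) ha 2 (1 / 2) (by ring)
    have htail := add_sum_Ioc_eq_sum_Icc (f := fun k => binomProb (2 * a - 1) (1 / 2) k)
      (by omega : a ≤ 2 * a - 1)
    rw [← Icc_add_one_left_eq_Ioc, sum_Icc_binomProb_one_half a (by omega),
      binomProb_one_half _ _ (by omega)] at htail
    rw [h, show a + a - 1 = 2 * a - 1 by omega, binomProb_one_half _ _ (by omega),
      eq_sub_of_add_eq' htail]
    have : (a : ℝ) - 1 ≠ 0 := by
      have : (2 : ℝ) ≤ a := by exact_mod_cast ha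
      linarith
    field_simp
    ring
end

section
/- For integers r < b (both ≥ 1), 2·∫_0^{1/2} β_{b,r}(p) dp = 2·P(X ≤ r−1) where X ~ Binomial(b+r−1, 1/2); equivalently ∫_0^{1}min(1, p/(1−p))^{b−r} β_{r,b}(p) dp = 2∫_0^{1/2} β_{b,r}(p) dp. -/
/-! Write `b = a + 1`, `r = m + 1`. The Beta(a+1, m+1) density is `(a+m+1)` times the Bernstein
polynomial `binomProb (a+m) · a`, and the derivative of a Bernstein polynomial of degree `n + 1` is
`n + 1` times a difference of two of degree `n`. Hence the binomial tail
`∑_{j ≤ m} binomProb (a+m+1) x (a+j+1)` telescopes to an antiderivative of the density: it is the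
Beta(a+1, m+1) distribution function, the normalising constant being read off at `x = 1`. At
`x = 1/2` the reflection `k ↦ a+m+1-k` turns this upper tail into the lower tail `P(X ≤ m)`.

For the first identity, on `[0, 1/2]` the weight `(p/(1-p))^(b-r)` turns `β_{r,b}` into `β_{b,r}`,
while on `[1/2, 1]` the weight is `1` and `p ↦ 1 - p` carries `β_{r,b}` to `β_{b,r}` on `[0, 1/2]`. -/

open Finset Set intervalIntegral

theorem Betafn_comm (α β : ℝ) : Betafn α β = Betafn β α := by
  have h := integral_comp_sub_left (a := 0) (b := 1)
    (fun x : ℝ => x ^ (β - 1) * (1 - x) ^ (α - 1)) 1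
  simp only [sub_sub_cancel, sub_zero, sub_self] at h
  rw [Betafn, Betafn, ← h]
  exact integral_congr fun x _ => mul_comm _ _

theorem betaDens_one_sub (α β p : ℝ) : betaDens α β (1 - p) = betaDens β α p := by
  rw [betaDens, betaDens, sub_sub_cancel, mul_comm, Betafn_comm]

theorem betaDens_natCast_succ (a m : ℕ) (p : ℝ) :
    betaDens (a + 1 : ℕ) (m + 1 : ℕ) p = p ^ a * (1 - p) ^ m / Betafn (a + 1 : ℕ) (m + 1 : ℕ) := by
  simp only [betaDens, Nat.cast_succ, add_sub_cancel_right, Real.rpow_natCast]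

theorem Betafn_natCast_succ (a m : ℕ) :
    Betafn (a + 1 : ℕ) (m + 1 : ℕ) = ∫ p in (0:ℝ)..1, p ^ a * (1 - p) ^ m := by
  simp only [Betafn, Nat.cast_succ, add_sub_cancel_right, Real.rpow_natCast]

theorem binomProb_eq_eval_bernsteinPolynomial (n k : ℕ) (p : ℝ) :
    binomProb n p k = (bernsteinPolynomial ℝ n k).eval p := by
  simp [binomProb, bernsteinPolynomial]

theorem binomProb_one_sub {n k : ℕ} (hk : k ≤ n) (p : ℝ) :
    binomProb n (1 - p) (n - k) = binomProb n p k := by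
  rw [binomProb, binomProb, Nat.choose_symm hk, Nat.sub_sub_self hk, sub_sub_cancel]
  ring

theorem derivative_sum_bernsteinPolynomial_tail (a m : ℕ) :
    Polynomial.derivative (∑ j ∈ range (m + 1), bernsteinPolynomial ℝ (a + m + 1) (a + j + 1))
      = ((a + m + 1 : ℕ) : Polynomial ℝ) * bernsteinPolynomial ℝ (a + m) a := by
  simp only [Polynomial.derivative_sum, bernsteinPolynomial.derivative_succ, Nat.add_sub_cancel,
    ← mul_sum]
  have telescope := sum_range_sub' (fun j => bernsteinPolynomial ℝ (a + m) (a + j)) (m + 1)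
  simp only [← add_assoc] at telescope
  rw [telescope, bernsteinPolynomial.eq_zero_of_lt ℝ (Nat.lt_succ_self (a + m)), add_zero, sub_zero]

theorem hasDerivAt_sum_binomProb_tail (a m : ℕ) (x : ℝ) :
    HasDerivAt (fun y => ∑ j ∈ range (m + 1), binomProb (a + m + 1) y (a + j + 1))
      ((a + m + 1 : ℕ) * binomProb (a + m) x a) x := by
  simpa only [binomProb_eq_eval_bernsteinPolynomial, ← Polynomial.eval_finsetSum,
    derivative_sum_bernsteinPolynomial_tail, Polynomial.eval_mul, Polynomial.eval_natCast] using
    Polynomial.hasDerivAt (∑ j ∈ range (m + 1), bernsteinPolynomial ℝ (a + m + 1) (a + j + 1)) x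

theorem integral_binomProb (a m : ℕ) (x : ℝ) :
    (a + m + 1 : ℕ) * ∫ p in (0:ℝ)..x, binomProb (a + m) p a
      = ∑ j ∈ range (m + 1), binomProb (a + m + 1) x (a + j + 1) := by
  have hcont : Continuous fun p => (a + m + 1 : ℕ) * binomProb (a + m) p a := by
    unfold binomProb
    fun_prop
  rw [← integral_const_mul, integral_eq_sub_of_hasDerivAt
    (fun y _ => hasDerivAt_sum_binomProb_tail a m y) (hcont.intervalIntegrable _ _)]
  simp [binomProb]

theorem sum_binomProb_tail_one (a m : ℕ) :
    ∑ j ∈ range (m + 1), binomProb (a + m + 1) 1 (a + j + 1) = 1 := by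
  simp [binomProb_eq_eval_bernsteinPolynomial, bernsteinPolynomial.eval_at_1]

theorem betaDens_natCast_succ_eq_binomProb (a m : ℕ) (p : ℝ) :
    betaDens (a + 1 : ℕ) (m + 1 : ℕ) p = (a + m + 1 : ℕ) * binomProb (a + m) p a := by
  have hbinom : ∀ q : ℝ, binomProb (a + m) q a = (a + m).choose a * (q ^ a * (1 - q) ^ m) := by
    intro q
    rw [binomProb, Nat.add_sub_cancel_left, mul_assoc]
  have hnorm : ((a + m + 1 : ℕ) * (a + m).choose a : ℝ) * Betafn (a + 1 : ℕ) (m + 1 : ℕ) = 1 := by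
    rw [Betafn_natCast_succ, mul_assoc, ← integral_const_mul]
    simp only [← hbinom]
    rw [integral_binomProb, sum_binomProb_tail_one]
  rw [betaDens_natCast_succ, div_eq_iff (right_ne_zero_of_mul_eq_one hnorm), hbinom]
  linear_combination -(p ^ a * (1 - p) ^ m) * hnorm

theorem continuous_betaDens_natCast_succ (a m : ℕ) :
    Continuous (betaDens (a + 1 : ℕ) (m + 1 : ℕ)) := by
  rw [funext (betaDens_natCast_succ_eq_binomProb a m)]
  unfold binomProb
  fun_prop

theorem integral_betaDens_natCast_succ (a m : ℕ) (x : ℝ) :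
    ∫ p in (0:ℝ)..x, betaDens (a + 1 : ℕ) (m + 1 : ℕ) p
      = ∑ j ∈ range (m + 1), binomProb (a + m + 1) x (a + j + 1) := by
  simp only [betaDens_natCast_succ_eq_binomProb, integral_const_mul, integral_binomProb]

theorem sum_binomProb_tail_eq_sum_one_sub (a m : ℕ) (p : ℝ) :
    ∑ j ∈ range (m + 1), binomProb (a + m + 1) p (a + j + 1)
      = ∑ k ∈ range (m + 1), binomProb (a + m + 1) (1 - p) k := by
  refine (sum_range_reflect _ _).symm.trans (sum_congr rfl fun k hk => ?_)
  rw [Finset.mem_range] at hk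
  rw [← binomProb_one_sub (by omega), show a + m + 1 - (a + (m + 1 - 1 - k) + 1) = k by omega]

theorem div_one_sub_pow_mul_betaDens {a m : ℕ} (hma : m ≤ a) {p : ℝ} (hp : p ≠ 1) :
    (p / (1 - p)) ^ (a - m) * betaDens (m + 1 : ℕ) (a + 1 : ℕ) p
      = betaDens (a + 1 : ℕ) (m + 1 : ℕ) p := by
  obtain ⟨k, rfl⟩ := Nat.exists_eq_add_of_le hma
  have h1p : 1 - p ≠ 0 := sub_ne_zero.mpr hp.symm
  rw [betaDens_natCast_succ, betaDens_natCast_succ, Betafn_comm, Nat.add_sub_cancel_left, div_pow,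
    pow_add, pow_add]
  field_simp

theorem integral_min_div_one_sub_pow_mul_betaDens {a m : ℕ} (hma : m < a) :
    ∫ p in (0:ℝ)..1, (min 1 (p / (1 - p))) ^ (a - m) * betaDens (m + 1 : ℕ) (a + 1 : ℕ) p
      = 2 * ∫ p in (0:ℝ)..(1 / 2), betaDens (a + 1 : ℕ) (m + 1 : ℕ) p := by
  set f := fun p : ℝ => (min 1 (p / (1 - p))) ^ (a - m) * betaDens (m + 1 : ℕ) (a + 1 : ℕ) p
  have hlow : EqOn (betaDens (a + 1 : ℕ) (m + 1 : ℕ)) f (uIoo 0 (1 / 2)) := by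
    rw [uIoo_of_le (by norm_num)]
    rintro p ⟨-, hp⟩
    have h1p : 0 < 1 - p := by linarith
    simp only [f, min_eq_right ((div_le_one h1p).2 (by linarith))]
    exact (div_one_sub_pow_mul_betaDens hma.le (by linarith : p < 1).ne).symm
  have hhigh : EqOn (betaDens (m + 1 : ℕ) (a + 1 : ℕ)) f (uIoo (1 / 2) 1) := by
    rw [uIoo_of_le (by norm_num)]
    rintro p ⟨hp, hp'⟩
    have h1p : 0 < 1 - p := by linarith
    simp only [f, min_eq_left ((one_le_div h1p).2 (by linarith)), one_pow, one_mul]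
  have hcont := continuous_betaDens_natCast_succ
  have hreflect := integral_comp_sub_left (a := 0) (b := 1 / 2) (betaDens (m + 1 : ℕ) (a + 1 : ℕ)) 1
  norm_num only [betaDens_one_sub] at hreflect
  rw [← integral_add_adjacent_intervals (((hcont _ _).intervalIntegrable _ _).congr_uIoo hlow)
      (((hcont _ _).intervalIntegrable _ _).congr_uIoo hhigh),
    ← integral_congr_uIoo hlow, ← integral_congr_uIoo hhigh, ← hreflect, two_mul]

/-- For integers `1 ≤ r < b`:
`∫_0^1 min(1, p/(1−p))^{b−r} β_{r,b}(p) dp = 2∫_0^{1/2} β_{b,r}(p) dp` and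
`2∫_0^{1/2} β_{b,r}(p) dp = 2 P(X_{b+r−1,1/2} ≤ r−1)`. -/
theorem polya_equalization (r b : ℕ) (hr : 1 ≤ r) (hrb : r < b) :
    (∫ p in (0:ℝ)..1, (min 1 (p / (1 - p))) ^ (b - r) * betaDens r b p)
      = 2 * ∫ p in (0:ℝ)..(1 / 2), betaDens b r p ∧
    2 * (∫ p in (0:ℝ)..(1 / 2), betaDens b r p)
      = 2 * ∑ k ∈ Finset.range r, binomProb (b + r - 1) (1 / 2) k := by
  obtain ⟨m, rfl⟩ : ∃ m, r = m + 1 := ⟨r - 1, by omega⟩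
  obtain ⟨a, rfl⟩ : ∃ a, b = a + 1 := ⟨b - 1, by omega⟩
  rw [Nat.add_sub_add_right, show a + 1 + (m + 1) - 1 = a + m + 1 by omega]
  refine ⟨integral_min_div_one_sub_pow_mul_betaDens (by omega), ?_⟩
  rw [integral_betaDens_natCast_succ, sum_binomProb_tail_eq_sum_one_sub,
    show (1 : ℝ) - 1 / 2 = 1 / 2 by norm_num]
end
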